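/- Let X ∈ 𝓢^q be closed and exact. Then the center of Q_X contains an element of order p which has no fixed points on supp X. -/

import Mathlib

open Equiv Pointwise

namespace FPS

/-- The support of a permutation of `ℕ`. -/
def psupp (ρ : Equiv.Perm ℕ) : Set ℕ := {ω | ρ ω ≠ ω}

/-- The support of a set of permutations of `ℕ`. -/
def ssupp (X : Set (Equiv.Perm ℕ)) : Set ℕ := ⋃ ρ ∈ X, psupp ρ

/-- `Sym(α)`: the subgroup of permutations of `ℕ` supported on the subset `α`. -/
def symOn (α : Set ℕ) : Subgroup (Equiv.Perm ℕ) where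
  carrier := {g | ∀ ω, ω ∉ α → g ω = ω}
  one_mem' := fun _ _ => rfl
  mul_mem' := by
    intro a b ha hb ω hω
    have hbω := hb ω hω
    have haω := ha ω hω
    show a (b ω) = ω
    rw [hbω, haω]
  inv_mem' := by
    intro a ha ω hω
    have haω := ha ω hω
    show a⁻¹ ω = ω
    nth_rewrite 1 [← haω]
    exact Equiv.symm_apply_apply a ω

/-- Membership in the family `𝓕`: finite nonempty sets of finitary permutations,
different from `{1}`. -/
def memF (X : Set (Equiv.Perm ℕ)) : Prop :=
  X.Finite ∧ X.Nonempty ∧ X ≠ {1} ∧ ∀ ρ ∈ X, (psupp ρ).Finite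

/-- Membership in `𝓢^q`: members of `𝓕` all of whose elements are products of `q`-cycles
(each orbit on the support has size `q`) with full support. -/
def memS (q : ℕ) (X : Set (Equiv.Perm ℕ)) : Prop :=
  memF X ∧ (∀ ρ ∈ X, psupp ρ = ssupp X) ∧
    ∀ ρ ∈ X, ∀ ω ∈ psupp ρ, (Set.range fun n : ℤ => (ρ ^ n) ω).ncard = q

/-- Right conjugation `x ↦ x^g = g⁻¹ x g`. -/
def conjR (g x : Equiv.Perm ℕ) : Equiv.Perm ℕ := g⁻¹ * x * g

/-- Conjugate of a set of permutations: `X^g`. -/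
def conjSet (g : Equiv.Perm ℕ) (X : Set (Equiv.Perm ℕ)) : Set (Equiv.Perm ℕ) := conjR g '' X

/-- The setwise stabilizer (under conjugation) of a set of permutations,
as a subgroup of the full group `Sym(ℕ)`. -/
def setStab (X : Set (Equiv.Perm ℕ)) : Subgroup (Equiv.Perm ℕ) where
  carrier := {g | ∀ x, x ∈ X ↔ g⁻¹ * x * g ∈ X}
  one_mem' := by
    intro x
    simp
  mul_mem' := by
    intro a b ha hb x
    have h1 := ha x
    have h2 := hb (a⁻¹ * x * a)
    have e : b⁻¹ * (a⁻¹ * x * a) * b = (a * b)⁻¹ * x * (a * b) := by group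
    rw [e] at h2
    exact h1.trans h2
  inv_mem' := by
    intro a ha x
    have h := ha (a * x * a⁻¹)
    have e : a⁻¹ * (a * x * a⁻¹) * a = x := by group
    rw [e] at h
    have e2 : a * x * a⁻¹ = a⁻¹⁻¹ * x * a⁻¹ := by group
    rw [e2] at h
    exact h.symm

/-- `N_X`: the stabilizer of `X` in `G_X = Sym(supp X)`. -/
def NX (X : Set (Equiv.Perm ℕ)) : Subgroup (Equiv.Perm ℕ) := symOn (ssupp X) ⊓ setStab X

/-- `S_X = C_{G_X}(X)`: the pointwise centralizer of `X` in `G_X = Sym(supp X)`. -/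
def SX (X : Set (Equiv.Perm ℕ)) : Subgroup (Equiv.Perm ℕ) :=
  symOn (ssupp X) ⊓ Subgroup.centralizer X

/-- `Q` is a Sylow `p`-subgroup of the subgroup `H` (that is, a maximal `p`-subgroup of `H`). -/
def IsSylowOf {G : Type*} [Group G] (p : ℕ) (Q H : Subgroup G) : Prop :=
  Q ≤ H ∧ IsPGroup p Q ∧ ∀ R : Subgroup G, R ≤ H → IsPGroup p R → Q ≤ R → R = Q

/-- `Ξ_X = ⋃_{g ∈ G_X} X^g`. -/
def Xi (X : Set (Equiv.Perm ℕ)) : Set (Equiv.Perm ℕ) :=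
  ⋃ g ∈ (symOn (ssupp X) : Set (Equiv.Perm ℕ)), conjSet g X

/-- `X` is closed: `C_{G_X}(Q_X) ∩ Ξ_X = X` for (any) Sylow `p`-subgroup `Q_X` of `S_X`. -/
def IsClosedSet (p : ℕ) (X : Set (Equiv.Perm ℕ)) : Prop :=
  ∀ Q : Subgroup (Equiv.Perm ℕ), IsSylowOf p Q (SX X) →
    (Subgroup.centralizer (Q : Set (Equiv.Perm ℕ)) : Set (Equiv.Perm ℕ)) ∩ Xi X = X

/-- `X` is exact: `supp Q_X = supp X` for (any) Sylow `p`-subgroup `Q_X` of `S_X`. -/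
def IsExactSet (p : ℕ) (X : Set (Equiv.Perm ℕ)) : Prop :=
  ∀ Q : Subgroup (Equiv.Perm ℕ), IsSylowOf p Q (SX X) →
    ssupp (Q : Set (Equiv.Perm ℕ)) = ssupp X

/-- `X` is projective: `Q_X = 1`. -/
def IsProjectiveSet (p : ℕ) (X : Set (Equiv.Perm ℕ)) : Prop :=
  ∀ Q : Subgroup (Equiv.Perm ℕ), IsSylowOf p Q (SX X) → Q = ⊥

/-- `X ∈ 𝓕` is irreducible if it is not a product of two members of `𝓕`
with disjoint supports. -/
def IsIrred (X : Set (Equiv.Perm ℕ)) : Prop :=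
  memF X ∧ ∀ Y Z : Set (Equiv.Perm ℕ), memF Y → memF Z →
    Disjoint (ssupp Y) (ssupp Z) → X ≠ Y * Z

/-- Two sets of permutations are equivalent if they are conjugate in `Sym(ℕ)`. -/
def EquivSet (X Y : Set (Equiv.Perm ℕ)) : Prop := ∃ g : Equiv.Perm ℕ, conjSet g X = Y

/-- `D` is a realization of `Δ^s X`: the diagonal of a product of `s` disjointly
supported conjugates of `X`. -/
def IsDelta (s : ℕ) (X D : Set (Equiv.Perm ℕ)) : Prop :=
  ∃ g : Fin s → Equiv.Perm ℕ,
    (∀ i j, i ≠ j → Disjoint (ssupp (conjSet (g i) X)) (ssupp (conjSet (g j) X))) ∧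
    D = (fun x => (List.ofFn fun i => conjR (g i) x).prod) '' X

/-- `D` is a realization of the `a`-fold `*`-power `X^a`: a product of `a` disjointly
supported conjugates of `X`. -/
def IsStarPow (a : ℕ) (X D : Set (Equiv.Perm ℕ)) : Prop :=
  ∃ g : Fin a → Equiv.Perm ℕ,
    (∀ i j, i ≠ j → Disjoint (ssupp (conjSet (g i) X)) (ssupp (conjSet (g j) X))) ∧
    D = (List.ofFn fun i => conjSet (g i) X).prod

/-- `X` is a transitive set: `⟨X⟩` is transitive on `supp X`. -/
def TransitiveSet (X : Set (Equiv.Perm ℕ)) : Prop :=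
  ∀ a ∈ ssupp X, ∀ b ∈ ssupp X, ∃ g ∈ Subgroup.closure X, g a = b

lemma mem_setStab {X : Set (Equiv.Perm ℕ)} {g : Equiv.Perm ℕ} :
    g ∈ setStab X ↔ ∀ x, x ∈ X ↔ g⁻¹ * x * g ∈ X := Iff.rfl

lemma conjR_mem {X : Set (Equiv.Perm ℕ)} {g : Equiv.Perm ℕ} (hg : g ∈ setStab X)
    {x : Equiv.Perm ℕ} (hx : x ∈ X) : g⁻¹ * x * g ∈ X :=
  (mem_setStab.mp hg x).mp hx

lemma conjL_mem {X : Set (Equiv.Perm ℕ)} {g : Equiv.Perm ℕ} (hg : g ∈ setStab X)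
    {x : Equiv.Perm ℕ} (hx : x ∈ X) : g * x * g⁻¹ ∈ X := by
  have h := mem_setStab.mp ((setStab X).inv_mem hg) x
  rw [inv_inv] at h
  exact h.mp hx

/-- The permutation of `X` induced by conjugation by an element of `N_X`. -/
def conjPerm (X : Set (Equiv.Perm ℕ)) (g : NX X) : Equiv.Perm X where
  toFun x := ⟨(g : Equiv.Perm ℕ) * x * (g : Equiv.Perm ℕ)⁻¹,
    conjL_mem (Subgroup.mem_inf.mp g.2).2 x.2⟩
  invFun x := ⟨(g : Equiv.Perm ℕ)⁻¹ * x * (g : Equiv.Perm ℕ),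
    conjR_mem (Subgroup.mem_inf.mp g.2).2 x.2⟩
  left_inv x := by
    apply Subtype.ext
    show (g : Equiv.Perm ℕ)⁻¹ * ((g : Equiv.Perm ℕ) * x * (g : Equiv.Perm ℕ)⁻¹) *
      (g : Equiv.Perm ℕ) = x
    group
  right_inv x := by
    apply Subtype.ext
    show (g : Equiv.Perm ℕ) * ((g : Equiv.Perm ℕ)⁻¹ * x * (g : Equiv.Perm ℕ)) *
      (g : Equiv.Perm ℕ)⁻¹ = x
    group

/-- The action of `N_X` on `X` by conjugation, as a homomorphism `N_X →* Sym(X)`. -/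
def MXhom (X : Set (Equiv.Perm ℕ)) : NX X →* Equiv.Perm X where
  toFun := conjPerm X
  map_one' := by
    apply Equiv.ext
    intro x
    apply Subtype.ext
    show ((1 : NX X) : Equiv.Perm ℕ) * x * ((1 : NX X) : Equiv.Perm ℕ)⁻¹ = x
    simp
  map_mul' a b := by
    apply Equiv.ext
    intro x
    apply Subtype.ext
    show ((a * b : NX X) : Equiv.Perm ℕ) * x * ((a * b : NX X) : Equiv.Perm ℕ)⁻¹
      = (a : Equiv.Perm ℕ) * ((b : Equiv.Perm ℕ) * x * (b : Equiv.Perm ℕ)⁻¹) *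
        (a : Equiv.Perm ℕ)⁻¹
    push_cast
    group

/-- `M_X = N_X/S_X`, realized as the image of `N_X` in `Sym(X)` (the action of `N_X`
on `X` is by conjugation, with kernel `S_X`). -/
def MX (X : Set (Equiv.Perm ℕ)) : Subgroup (Equiv.Perm X) := (MXhom X).range

/-- The permutation module `k[Ω]` of the `G`-set `Ω` has a nonzero projective direct summand. -/
def HasProjSummand (k : Type) [Field k] (G : Type*) [Group G] (Ω : Type*) [MulAction G Ω] :
    Prop :=
  ∃ P W : Submodule (MonoidAlgebra k G) (Representation.ofMulAction k G Ω).asModule,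
    IsCompl P W ∧ P ≠ ⊥ ∧ Module.Projective (MonoidAlgebra k G) P

/-- `X` is a fixed point set: `X ∈ 𝓢^q`, `X` is closed, and the permutation
`k M_X`-module `k[X]` has a nonzero projective direct summand. -/
def IsFPS (p q : ℕ) (k : Type) [Field k] (X : Set (Equiv.Perm ℕ)) : Prop :=
  memS q X ∧ IsClosedSet p X ∧ HasProjSummand k (MX X) X

/-- `X` and `Y` (with disjoint supports) are coprime: `N_{X*Y} = N_X × N_Y`. -/
def CoprimeSets (X Y : Set (Equiv.Perm ℕ)) : Prop := NX (X * Y) = NX X ⊔ NX Y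

/-- `X` is projective-free: no factor in a decomposition of `X` into irreducibles
is projective. -/
def ProjFree (p : ℕ) (X : Set (Equiv.Perm ℕ)) : Prop :=
  ∀ L : List (Set (Equiv.Perm ℕ)), (∀ Y ∈ L, IsIrred Y) →
    L.Pairwise (fun A B => Disjoint (ssupp A) (ssupp B)) →
    X = L.prod → ∀ Y ∈ L, ¬ IsProjectiveSet p Y


section Aux

/-- Restriction of a permutation to an invariant set (identity elsewhere). -/
noncomputable def rOn (U : Set ℕ) (g : Equiv.Perm ℕ) (hg : ∀ ω, ω ∈ U ↔ g ω ∈ U) :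
    Equiv.Perm ℕ :=
  letI := Classical.decPred (· ∈ U)
  Equiv.Perm.ofSubtype (g.subtypePerm (fun ω => (hg ω).symm))

lemma rOn_apply_of_mem {U : Set ℕ} {g : Equiv.Perm ℕ} (hg : ∀ ω, ω ∈ U ↔ g ω ∈ U)
    {ω : ℕ} (hω : ω ∈ U) : rOn U g hg ω = g ω := by
  letI := Classical.decPred (· ∈ U)
  rw [rOn, Equiv.Perm.ofSubtype_apply_of_mem _ hω]
  rfl

lemma rOn_apply_of_not_mem {U : Set ℕ} {g : Equiv.Perm ℕ} (hg : ∀ ω, ω ∈ U ↔ g ω ∈ U)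
    {ω : ℕ} (hω : ω ∉ U) : rOn U g hg ω = ω := by
  letI := Classical.decPred (· ∈ U)
  rw [rOn, Equiv.Perm.ofSubtype_apply_of_not_mem _ hω]

lemma rOn_one (U : Set ℕ) (hg : ∀ ω, ω ∈ U ↔ (1 : Equiv.Perm ℕ) ω ∈ U) :
    rOn U 1 hg = 1 := by
  ext ω
  by_cases hω : ω ∈ U
  · rw [rOn_apply_of_mem hg hω]
  · rw [rOn_apply_of_not_mem hg hω]
    rfl

lemma pow_apply_eq_self_of_apply_eq_self {g : Equiv.Perm ℕ} {ν : ℕ} (h : g ν = ν) :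
    ∀ k : ℕ, (g ^ k) ν = ν := by
  intro k
  induction k with
  | zero => rfl
  | succ k ih => rw [pow_succ, Equiv.Perm.mul_apply, h, ih]

/-- `HH X Q` : the subgroup generated by `Q` and `X`. -/
noncomputable def HH (X : Set (Equiv.Perm ℕ)) (Q : Subgroup (Equiv.Perm ℕ)) :
    Subgroup (Equiv.Perm ℕ) :=
  Subgroup.closure ((Q : Set (Equiv.Perm ℕ)) ∪ X)

/-- The orbit of a point under `HH X Q`. -/
def orbH (X : Set (Equiv.Perm ℕ)) (Q : Subgroup (Equiv.Perm ℕ)) (ω₀ : ℕ) : Set ℕ :=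
  {ν | ∃ h ∈ HH X Q, h ω₀ = ν}

lemma orbH_self {X : Set (Equiv.Perm ℕ)} {Q : Subgroup (Equiv.Perm ℕ)} (ω₀ : ℕ) :
    ω₀ ∈ orbH X Q ω₀ :=
  ⟨1, Subgroup.one_mem _, rfl⟩

lemma orbH_inv {X : Set (Equiv.Perm ℕ)} {Q : Subgroup (Equiv.Perm ℕ)} {ω₀ : ℕ}
    {g : Equiv.Perm ℕ} (hg : g ∈ HH X Q) (ν : ℕ) :
    ν ∈ orbH X Q ω₀ ↔ g ν ∈ orbH X Q ω₀ := by
  constructor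
  · rintro ⟨h, hh, rfl⟩
    exact ⟨g * h, Subgroup.mul_mem _ hg hh, rfl⟩
  · rintro ⟨h, hh, hhν⟩
    refine ⟨g⁻¹ * h, Subgroup.mul_mem _ (Subgroup.inv_mem _ hg) hh, ?_⟩
    rw [Equiv.Perm.mul_apply, hhν]
    exact Equiv.symm_apply_apply g ν

lemma mem_symOn {α : Set ℕ} {g : Equiv.Perm ℕ} :
    g ∈ symOn α ↔ ∀ ω, ω ∉ α → g ω = ω := Iff.rfl

lemma symOn_maps {α : Set ℕ} {g : Equiv.Perm ℕ} (hg : g ∈ symOn α) {ω : ℕ}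
    (hω : ω ∈ α) : g ω ∈ α := by
  by_contra hc
  have h1 : g (g ω) = g ω := hg _ hc
  have h2 := g.injective h1
  rw [h2] at hc
  exact hc hω

/-- The key one-orbit construction: an order-`p` element of the center of `Q` moving
exactly the points of one orbit of `⟨Q, X⟩`. -/
lemma exists_orbit_elt {p : ℕ} (hp : p.Prime) (X : Set (Equiv.Perm ℕ))
    (Q : Subgroup (Equiv.Perm ℕ)) (hQ : IsSylowOf p Q (SX X))
    (hfin : (ssupp X).Finite)
    (hsupp : ssupp (Q : Set (Equiv.Perm ℕ)) = ssupp X)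
    (ω₀ : ℕ) (hω₀ : ω₀ ∈ ssupp X) :
    ∃ z : Equiv.Perm ℕ, z ∈ Q ∧ (∀ u ∈ Q, u * z = z * u) ∧ z ^ p = 1 ∧
      (∀ ν ∈ orbH X Q ω₀, z ν ≠ ν) ∧ (∀ ν, ν ∉ orbH X Q ω₀ → z ν = ν) := by
  haveI : Fact p.Prime := ⟨hp⟩
  set U := orbH X Q ω₀ with hUdef
  -- memberships in HH
  have hQH : ∀ g ∈ Q, g ∈ HH X Q := fun g hg => Subgroup.subset_closure (Or.inl hg)
  have hXH : ∀ x ∈ X, x ∈ HH X Q := fun x hx => Subgroup.subset_closure (Or.inr hx)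
  have presU : ∀ g ∈ Q, ∀ ν, ν ∈ U ↔ g ν ∈ U := fun g hg => orbH_inv (hQH g hg)
  have presUX : ∀ x ∈ X, ∀ ν, ν ∈ U ↔ x ν ∈ U := fun x hx => orbH_inv (hXH x hx)
  have presUc : ∀ g ∈ Q, ∀ ν, ν ∈ Uᶜ ↔ g ν ∈ Uᶜ := by
    intro g hg ν
    simp only [Set.mem_compl_iff]
    exact (presU g hg ν).not
  -- basic facts about members of Q
  have hQsym : ∀ g ∈ Q, g ∈ symOn (ssupp X) := fun g hg =>
    (Subgroup.mem_inf.mp (hQ.1 hg)).1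
  have hQcen : ∀ g ∈ Q, ∀ x ∈ X, x * g = g * x := fun g hg =>
    Subgroup.mem_centralizer_iff.mp (Subgroup.mem_inf.mp (hQ.1 hg)).2
  -- the doubling homomorphism
  let φ : ↥Q × ↥Q →* Equiv.Perm ℕ :=
    { toFun := fun ab =>
        rOn U (ab.1 : Equiv.Perm ℕ) (presU _ ab.1.2) *
          rOn Uᶜ (ab.2 : Equiv.Perm ℕ) (presUc _ ab.2.2)
      map_one' := by
        ext ν
        simp only [Equiv.Perm.mul_apply, Equiv.Perm.one_apply]
        by_cases hν : ν ∈ U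
        · have hνc : ν ∉ Uᶜ := fun h => h hν
          rw [rOn_apply_of_not_mem _ hνc, rOn_apply_of_mem _ hν]
          rfl
        · have hνc : ν ∈ Uᶜ := hν
          rw [rOn_apply_of_mem _ hνc]
          show (rOn U _ _) ν = ν
          rw [rOn_apply_of_not_mem _ hν]
      map_mul' := by
        intro a b
        ext ν
        simp only [Equiv.Perm.mul_apply]
        by_cases hν : ν ∈ U
        · have hνc : ν ∉ Uᶜ := fun h => h hν
          have hb1 : ((b.1 : Equiv.Perm ℕ)) ν ∈ U := (presU _ b.1.2 ν).mp hν
          have hb1c : ((b.1 : Equiv.Perm ℕ)) ν ∉ Uᶜ := fun h => h hb1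
          rw [rOn_apply_of_not_mem _ hνc, rOn_apply_of_mem _ hν,
            rOn_apply_of_not_mem _ hνc, rOn_apply_of_mem _ hν,
            rOn_apply_of_not_mem _ hb1c, rOn_apply_of_mem _ hb1]
          simp [Prod.fst_mul, Equiv.Perm.mul_apply]
        · have hνc : ν ∈ Uᶜ := hν
          have hb2 : ((b.2 : Equiv.Perm ℕ)) ν ∈ Uᶜ := (presUc _ b.2.2 ν).mp hνc
          have hb2' : ((b.2 : Equiv.Perm ℕ)) ν ∉ U := hb2
          have hab : ((a.2 : Equiv.Perm ℕ)) (((b.2 : Equiv.Perm ℕ)) ν) ∈ Uᶜ :=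
            (presUc _ a.2.2 _).mp hb2
          have hab' : ((a.2 : Equiv.Perm ℕ)) (((b.2 : Equiv.Perm ℕ)) ν) ∉ U := hab
          have habν : ((a.2 * b.2 : ↥Q) : Equiv.Perm ℕ) ν ∉ U := by
            have : (((a * b).2 : ↥Q) : Equiv.Perm ℕ) ν ∈ Uᶜ :=
              (presUc _ (a * b).2.2 ν).mp hνc
            simpa using this
          rw [rOn_apply_of_mem _ hνc, rOn_apply_of_mem _ hνc,
            rOn_apply_of_not_mem _ hb2', rOn_apply_of_mem _ hb2,
            rOn_apply_of_not_mem _ hab']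
          have hLnm : (((a * b).2 : ↥Q) : Equiv.Perm ℕ) ν ∉ U := by simpa using habν
          rw [rOn_apply_of_not_mem _ hLnm]
          simp [Prod.snd_mul, Equiv.Perm.mul_apply] }
  -- the image of φ is a p-subgroup of S_X containing Q, hence equals Q
  have hQQp : IsPGroup p (↥Q × ↥Q) := by
    intro g
    obtain ⟨k1, h1⟩ := hQ.2.1 g.1
    obtain ⟨k2, h2⟩ := hQ.2.1 g.2
    refine ⟨k1 + k2, ?_⟩
    have e1 : g.1 ^ p ^ (k1 + k2) = 1 := by
      rw [pow_add, pow_mul, h1, one_pow]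
    have e2 : g.2 ^ p ^ (k1 + k2) = 1 := by
      rw [pow_add, Nat.mul_comm, pow_mul, h2, one_pow]
    have : g ^ p ^ (k1 + k2) = (g.1 ^ p ^ (k1 + k2), g.2 ^ p ^ (k1 + k2)) := rfl
    rw [this, e1, e2]
    rfl
  have hrangep : IsPGroup p φ.range := by
    rw [MonoidHom.range_eq_map]
    exact (hQQp.to_subgroup ⊤).map φ
  have hQleRange : Q ≤ φ.range := by
    intro g hg
    refine ⟨(⟨g, hg⟩, ⟨g, hg⟩), ?_⟩
    ext ν
    simp only [φ, MonoidHom.coe_mk, OneHom.coe_mk, Equiv.Perm.mul_apply]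
    by_cases hν : ν ∈ U
    · have hνc : ν ∉ Uᶜ := fun h => h hν
      rw [rOn_apply_of_not_mem _ hνc, rOn_apply_of_mem _ hν]
    · have hνc : ν ∈ Uᶜ := hν
      rw [rOn_apply_of_mem _ hνc]
      have : (g : Equiv.Perm ℕ) ν ∉ U := (presUc _ hg ν).mp hνc
      rw [rOn_apply_of_not_mem _ this]
  have hRangeLe : φ.range ≤ SX X := by
    rintro g ⟨⟨a, b⟩, rfl⟩
    rw [SX, Subgroup.mem_inf]
    constructor
    · intro ω hω
      simp only [φ, MonoidHom.coe_mk, OneHom.coe_mk, Equiv.Perm.mul_apply]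
      by_cases hν : ω ∈ U
      · have hνc : ω ∉ Uᶜ := fun h => h hν
        rw [rOn_apply_of_not_mem _ hνc, rOn_apply_of_mem _ hν]
        exact hQsym _ a.2 ω hω
      · have hνc : ω ∈ Uᶜ := hν
        rw [rOn_apply_of_mem _ hνc]
        have hbω : (b : Equiv.Perm ℕ) ω = ω := hQsym _ b.2 ω hω
        rw [hbω, rOn_apply_of_not_mem _ hν]
    · rw [Subgroup.mem_centralizer_iff]
      intro x hx
      ext ν
      simp only [Equiv.Perm.mul_apply, φ, MonoidHom.coe_mk, OneHom.coe_mk]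
      by_cases hν : ν ∈ U
      · have hνc : ν ∉ Uᶜ := fun h => h hν
        have hxν : x ν ∈ U := (presUX x hx ν).mp hν
        have hxνc : x ν ∉ Uᶜ := fun h => h hxν
        rw [rOn_apply_of_not_mem _ hνc, rOn_apply_of_mem _ hν,
          rOn_apply_of_not_mem _ hxνc, rOn_apply_of_mem _ hxν]
        have := hQcen _ a.2 x hx
        calc x ((a : Equiv.Perm ℕ) ν) = (x * (a : Equiv.Perm ℕ)) ν := rfl
          _ = ((a : Equiv.Perm ℕ) * x) ν := by rw [this]
          _ = (a : Equiv.Perm ℕ) (x ν) := rfl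
      · have hνc : ν ∈ Uᶜ := hν
        have hxν : x ν ∉ U := fun h => hν ((presUX x hx ν).mpr h)
        have hxνc : x ν ∈ Uᶜ := hxν
        have hbν : (b : Equiv.Perm ℕ) ν ∈ Uᶜ := (presUc _ b.2 ν).mp hνc
        have hbν' : (b : Equiv.Perm ℕ) ν ∉ U := hbν
        have hbxν : (b : Equiv.Perm ℕ) (x ν) ∈ Uᶜ := (presUc _ b.2 (x ν)).mp hxνc
        have hbxν' : (b : Equiv.Perm ℕ) (x ν) ∉ U := hbxν
        rw [rOn_apply_of_mem _ hνc, rOn_apply_of_not_mem _ hbν',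
          rOn_apply_of_mem _ hxνc, rOn_apply_of_not_mem _ hbxν']
        have := hQcen _ b.2 x hx
        calc x ((b : Equiv.Perm ℕ) ν) = (x * (b : Equiv.Perm ℕ)) ν := rfl
          _ = ((b : Equiv.Perm ℕ) * x) ν := by rw [this]
          _ = (b : Equiv.Perm ℕ) (x ν) := rfl
  have hrange : φ.range = Q := hQ.2.2 φ.range hRangeLe hrangep hQleRange
  -- restriction of elements of Q to U lies in Q
  have hrOnQ : ∀ g, ∀ hg : g ∈ Q, rOn U g (presU g hg) ∈ Q := by
    intro g hg
    rw [← hrange]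
    refine ⟨(⟨g, hg⟩, 1), ?_⟩
    have h1 : ((1 : ↥Q) : Equiv.Perm ℕ) = 1 := rfl
    simp only [φ, MonoidHom.coe_mk, OneHom.coe_mk]
    ext ν
    by_cases hν : ν ∈ Uᶜ
    · rw [Equiv.Perm.mul_apply, rOn_apply_of_mem _ hν, h1]
      rfl
    · rw [Equiv.Perm.mul_apply, rOn_apply_of_not_mem _ hν]
  -- the subgroup K = Q ⊓ Sym(U)
  set K := Q ⊓ symOn U with hKdef
  have hKQ : K ≤ Q := inf_le_left
  -- K is nontrivial: exactness
  have hω₀Q : ω₀ ∈ ssupp (Q : Set (Equiv.Perm ℕ)) := by rw [hsupp]; exact hω₀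
  obtain ⟨g₀, hg₀Q, hg₀ω⟩ : ∃ g ∈ (Q : Set (Equiv.Perm ℕ)), ω₀ ∈ psupp g := by
    rw [ssupp] at hω₀Q
    simpa using Set.mem_iUnion₂.mp hω₀Q
  have hg₀Q' : g₀ ∈ Q := hg₀Q
  set k₀ := rOn U g₀ (presU g₀ hg₀Q') with hk₀def
  have hk₀K : k₀ ∈ K := by
    refine Subgroup.mem_inf.mpr ⟨hrOnQ g₀ hg₀Q', ?_⟩
    intro ν hν
    exact rOn_apply_of_not_mem _ hν
  have hk₀ne : k₀ ≠ 1 := by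
    intro h
    have h1 : k₀ ω₀ = ω₀ := by rw [h]; rfl
    rw [hk₀def, rOn_apply_of_mem _ (orbH_self ω₀)] at h1
    exact hg₀ω h1
  -- finiteness
  haveI hfinSym : Finite ↥(symOn (ssupp X)) := by
    haveI := hfin.to_subtype
    let F : ↥(symOn (ssupp X)) → (↥(ssupp X) → ↥(ssupp X)) := fun g a =>
      ⟨(g : Equiv.Perm ℕ) a, symOn_maps g.2 a.2⟩
    have hF : Function.Injective F := by
      intro g g' hgg'
      apply Subtype.ext
      ext ω
      by_cases hω : ω ∈ ssupp X
      · have := congrFun hgg' ⟨ω, hω⟩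
        exact Subtype.ext_iff.mp this
      · rw [g.2 ω hω, g'.2 ω hω]
    exact Finite.of_injective F hF
  haveI hfinK : Finite ↥K := by
    have hle : K ≤ symOn (ssupp X) := le_trans hKQ (fun g hg => hQsym g hg)
    exact Finite.of_injective (Subgroup.inclusion hle) (Subgroup.inclusion_injective hle)
  -- conjugation action of Q on K
  have hconj : ∀ (q : ↥Q) (k : ↥K),
      (q : Equiv.Perm ℕ) * (k : Equiv.Perm ℕ) * (q : Equiv.Perm ℕ)⁻¹ ∈ K := by
    intro q k
    have hkQ : (k : Equiv.Perm ℕ) ∈ Q := hKQ k.2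
    have hkU : (k : Equiv.Perm ℕ) ∈ symOn U := (Subgroup.mem_inf.mp k.2).2
    refine Subgroup.mem_inf.mpr ⟨?_, ?_⟩
    · exact Subgroup.mul_mem _ (Subgroup.mul_mem _ q.2 hkQ) (Subgroup.inv_mem _ q.2)
    · intro ν hν
      have hq : (q : Equiv.Perm ℕ)⁻¹ ∈ Q := Subgroup.inv_mem _ q.2
      have hqν : (q : Equiv.Perm ℕ)⁻¹ ν ∉ U := fun h =>
        hν ((presU _ hq ν).mpr h)
      have h1 : (k : Equiv.Perm ℕ) ((q : Equiv.Perm ℕ)⁻¹ ν) = (q : Equiv.Perm ℕ)⁻¹ ν :=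
        hkU _ hqν
      calc ((q : Equiv.Perm ℕ) * (k : Equiv.Perm ℕ) * (q : Equiv.Perm ℕ)⁻¹) ν
          = (q : Equiv.Perm ℕ) ((k : Equiv.Perm ℕ) ((q : Equiv.Perm ℕ)⁻¹ ν)) := rfl
        _ = (q : Equiv.Perm ℕ) ((q : Equiv.Perm ℕ)⁻¹ ν) := by rw [h1]
        _ = ν := Equiv.apply_symm_apply (q : Equiv.Perm ℕ) ν
  letI actSMul : SMul ↥Q ↥K := ⟨fun q k => ⟨_, hconj q k⟩⟩
  have smul_def : ∀ (q : ↥Q) (k : ↥K), (q • k : ↥K) =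
      ⟨(q : Equiv.Perm ℕ) * (k : Equiv.Perm ℕ) * (q : Equiv.Perm ℕ)⁻¹, hconj q k⟩ :=
    fun _ _ => rfl
  letI act : MulAction ↥Q ↥K :=
    { one_smul := by
        intro k
        rw [smul_def]
        apply Subtype.ext
        simp
      mul_smul := by
        intro q r k
        rw [smul_def, smul_def, smul_def]
        apply Subtype.ext
        simp only [Subgroup.coe_mul, mul_inv_rev]
        group }
  -- fixed point counting
  have hmod := hQ.2.1.card_modEq_card_fixedPoints ↥K
  have hKp : IsPGroup p ↥K := hQ.2.1.to_le hKQ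
  obtain ⟨n, hn⟩ := IsPGroup.iff_card.mp hKp
  haveI hKnt : Nontrivial ↥K :=
    ⟨⟨⟨k₀, hk₀K⟩, 1, fun h => hk₀ne (Subtype.ext_iff.mp h)⟩⟩
  have hn0 : n ≠ 0 := by
    intro h
    rw [h, pow_zero] at hn
    have := Finite.one_lt_card (α := ↥K)
    omega
  have hdvdK : p ∣ Nat.card ↥K := by
    rw [hn]; exact dvd_pow_self p hn0
  have hdvdF : p ∣ Nat.card ↥(MulAction.fixedPoints ↥Q ↥K) :=
    Nat.modEq_zero_iff_dvd.mp (hmod.symm.trans (Nat.modEq_zero_iff_dvd.mpr hdvdK))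
  have h1F : (1 : ↥K) ∈ MulAction.fixedPoints ↥Q ↥K := by
    intro q
    rw [smul_def]
    apply Subtype.ext
    simp
  haveI : Nonempty ↥(MulAction.fixedPoints ↥Q ↥K) := ⟨⟨1, h1F⟩⟩
  have hposF : 0 < Nat.card ↥(MulAction.fixedPoints ↥Q ↥K) := Nat.card_pos
  have h2F : 1 < Nat.card ↥(MulAction.fixedPoints ↥Q ↥K) := by
    have := Nat.le_of_dvd hposF hdvdF
    have := hp.two_le
    omega
  haveI : Nontrivial ↥(MulAction.fixedPoints ↥Q ↥K) :=
    Finite.one_lt_card_iff_nontrivial.mp h2F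
  obtain ⟨zf, hzf⟩ := exists_ne (⟨⟨1, Subgroup.one_mem K⟩, h1F⟩ :
    ↥(MulAction.fixedPoints ↥Q ↥K))
  set z₀ : Equiv.Perm ℕ := ((zf : ↥K) : Equiv.Perm ℕ) with hz₀def
  have hz₀K : z₀ ∈ K := (zf : ↥K).2
  have hz₀Q : z₀ ∈ Q := hKQ hz₀K
  have hz₀U : ∀ ν, ν ∉ U → z₀ ν = ν := fun ν hν => (Subgroup.mem_inf.mp hz₀K).2 ν hν
  have hz₀ne : z₀ ≠ 1 := by
    intro h
    apply hzf
    apply Subtype.ext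
    apply Subtype.ext
    exact h
  have hz₀c : ∀ u ∈ Q, u * z₀ = z₀ * u := by
    intro u hu
    have := zf.2 ⟨u, hu⟩
    rw [smul_def] at this
    have h2 : u * z₀ * u⁻¹ = z₀ := Subtype.ext_iff.mp this
    calc u * z₀ = u * z₀ * u⁻¹ * u := by group
      _ = z₀ * u := by rw [h2]
  -- replace z₀ by a power of order p
  have hPex : ∃ k : ℕ, z₀ ^ p ^ k = 1 := by
    obtain ⟨k, hk⟩ := hQ.2.1 ⟨z₀, hz₀Q⟩
    refine ⟨k, ?_⟩
    have := Subtype.ext_iff.mp hk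
    simpa using this
  haveI : DecidablePred fun k : ℕ => z₀ ^ p ^ k = 1 := Classical.decPred _
  set n₁ := Nat.find hPex with hn₁def
  have hn₁spec : z₀ ^ p ^ n₁ = 1 := Nat.find_spec hPex
  have hn₁pos : n₁ ≠ 0 := by
    intro h
    apply hz₀ne
    have := hn₁spec
    rwa [h, pow_zero, pow_one] at this
  set z₁ := z₀ ^ p ^ (n₁ - 1) with hz₁def
  have hz₁ne : z₁ ≠ 1 := Nat.find_min hPex (Nat.sub_lt (Nat.pos_of_ne_zero hn₁pos) one_pos)
  have hz₁p : z₁ ^ p = 1 := by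
    have hsucc : n₁ - 1 + 1 = n₁ := by omega
    rw [hz₁def, ← pow_mul, ← pow_succ, hsucc]
    exact hn₁spec
  have hz₁Q : z₁ ∈ Q := Subgroup.pow_mem _ hz₀Q _
  have hz₁c : ∀ u ∈ Q, u * z₁ = z₁ * u := by
    intro u hu
    have hcom : Commute u z₀ := hz₀c u hu
    exact (hcom.pow_right _).eq
  have hz₁fix : ∀ ν, ν ∉ U → z₁ ν = ν := fun ν hν =>
    pow_apply_eq_self_of_apply_eq_self (hz₀U ν hν) _
  -- z₁ moves every point of U
  have hz₁H : ∀ h ∈ HH X Q, z₁ * h = h * z₁ := by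
    have hle : HH X Q ≤ Subgroup.centralizer {z₁} := by
      rw [HH]
      rw [Subgroup.closure_le]
      rintro g (hg | hg)
      · rw [SetLike.mem_coe, Subgroup.mem_centralizer_iff]
        intro y hy
        rw [Set.mem_singleton_iff] at hy
        subst hy
        exact (hz₁c g hg).symm
      · rw [SetLike.mem_coe, Subgroup.mem_centralizer_iff]
        intro y hy
        rw [Set.mem_singleton_iff] at hy
        subst hy
        have := Subgroup.mem_centralizer_iff.mp (Subgroup.mem_inf.mp (hQ.1 hz₁Q)).2
        exact (this g hg).symm
    intro h hh
    have := Subgroup.mem_centralizer_iff.mp (hle hh)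
    exact this z₁ rfl
  obtain ⟨ω₁, hω₁⟩ : ∃ ω₁, z₁ ω₁ ≠ ω₁ := by
    by_contra hc
    push_neg at hc
    exact hz₁ne (Equiv.ext hc)
  have hω₁U : ω₁ ∈ U := by
    by_contra hc
    exact hω₁ (hz₁fix ω₁ hc)
  have hz₁mov : ∀ ν ∈ U, z₁ ν ≠ ν := by
    rintro ν ⟨h, hh, rfl⟩
    obtain ⟨h₁, hh₁, hh₁ω⟩ := hω₁U
    have hh₂ : h * h₁⁻¹ ∈ HH X Q := Subgroup.mul_mem _ hh (Subgroup.inv_mem _ hh₁)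
    have hν : h ω₀ = (h * h₁⁻¹) ω₁ := by
      rw [Equiv.Perm.mul_apply, ← hh₁ω, Equiv.Perm.inv_def, Equiv.symm_apply_apply]
    rw [hν]
    have hcomm := hz₁H _ hh₂
    have : z₁ ((h * h₁⁻¹) ω₁) = (h * h₁⁻¹) (z₁ ω₁) := by
      calc z₁ ((h * h₁⁻¹) ω₁) = (z₁ * (h * h₁⁻¹)) ω₁ := rfl
        _ = ((h * h₁⁻¹) * z₁) ω₁ := by rw [hcomm]
        _ = (h * h₁⁻¹) (z₁ ω₁) := rfl
    rw [this]
    exact fun hcon => hω₁ ((h * h₁⁻¹).injective hcon)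
  exact ⟨z₁, hz₁Q, hz₁c, hz₁p, hz₁mov, hz₁fix⟩

/-- Recursive construction over invariant subsets. -/
lemma exists_z_rec {p : ℕ} (hp : p.Prime) (X : Set (Equiv.Perm ℕ))
    (Q : Subgroup (Equiv.Perm ℕ)) (hQ : IsSylowOf p Q (SX X))
    (hfin : (ssupp X).Finite)
    (hsupp : ssupp (Q : Set (Equiv.Perm ℕ)) = ssupp X) :
    ∀ (n : ℕ) (β : Set ℕ), β.Finite → β.ncard ≤ n → β ⊆ ssupp X →
      (∀ h ∈ HH X Q, ∀ ω ∈ β, h ω ∈ β) →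
      ∃ z : Equiv.Perm ℕ, z ∈ Q ∧ (∀ u ∈ Q, u * z = z * u) ∧ z ^ p = 1 ∧
        (∀ ω ∈ β, z ω ≠ ω) ∧ (∀ ω, ω ∉ β → z ω = ω) := by
  intro n
  induction n with
  | zero =>
    intro β hfinβ hcard hsub hinv
    have hβ : β = ∅ := (Set.ncard_eq_zero hfinβ).mp (Nat.le_zero.mp hcard)
    subst hβ
    exact ⟨1, Subgroup.one_mem _, fun u _ => by rw [mul_one, one_mul], one_pow p,
      fun ω hω => absurd hω (Set.notMem_empty ω), fun ω _ => rfl⟩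
  | succ n ih =>
    intro β hfinβ hcard hsub hinv
    rcases Set.eq_empty_or_nonempty β with hβ | ⟨ω₀, hω₀⟩
    · subst hβ
      exact ⟨1, Subgroup.one_mem _, fun u _ => by rw [mul_one, one_mul], one_pow p,
        fun ω hω => absurd hω (Set.notMem_empty ω), fun ω _ => rfl⟩
    · obtain ⟨zU, hzUQ, hzUc, hzUp, hzUmov, hzUfix⟩ :=
        exists_orbit_elt hp X Q hQ hfin hsupp ω₀ (hsub hω₀)
      set U := orbH X Q ω₀ with hUdef
      have hUβ : ∀ ν ∈ U, ν ∈ β := by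
        rintro ν ⟨h, hh, rfl⟩
        exact hinv h hh ω₀ hω₀
      set β' := β \ U with hβ'def
      have hfinβ' : β'.Finite := hfinβ.subset Set.diff_subset
      have hss : β' ⊂ β := by
        refine ⟨Set.diff_subset, fun hc => ?_⟩
        exact (hc hω₀).2 (orbH_self ω₀)
      have hlt : β'.ncard < β.ncard := Set.ncard_lt_ncard hss hfinβ
      have hcard' : β'.ncard ≤ n := by omega
      have hsub' : β' ⊆ ssupp X := Set.diff_subset.trans hsub
      have hinv' : ∀ h ∈ HH X Q, ∀ ω ∈ β', h ω ∈ β' := by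
        rintro h hh ω ⟨hωβ, hωU⟩
        exact ⟨hinv h hh ω hωβ, fun hc => hωU ((orbH_inv hh ω).mpr hc)⟩
      obtain ⟨z', hz'Q, hz'c, hz'p, hz'mov, hz'fix⟩ := ih β' hfinβ' hcard' hsub' hinv'
      refine ⟨zU * z', Subgroup.mul_mem _ hzUQ hz'Q, ?_, ?_, ?_, ?_⟩
      · intro u hu
        calc u * (zU * z') = (u * zU) * z' := by rw [mul_assoc]
          _ = (zU * u) * z' := by rw [hzUc u hu]
          _ = zU * (u * z') := by rw [mul_assoc]
          _ = zU * (z' * u) := by rw [hz'c u hu]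
          _ = (zU * z') * u := by rw [mul_assoc]
      · have hcom : Commute zU z' := (hzUc z' hz'Q).symm
        rw [hcom.mul_pow, hzUp, hz'p, one_mul]
      · intro ω hωβ
        by_cases hωU : ω ∈ U
        · have h1 : z' ω = ω := hz'fix ω (fun h => h.2 hωU)
          rw [Equiv.Perm.mul_apply, h1]
          exact hzUmov ω hωU
        · have hωβ' : ω ∈ β' := ⟨hωβ, hωU⟩
          have h1 : z' ω ∈ β' := by
            by_contra hc
            have h2 : z' (z' ω) = z' ω := hz'fix _ hc
            exact hz'mov ω hωβ' (z'.injective h2)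
          rw [Equiv.Perm.mul_apply, hzUfix _ h1.2]
          exact hz'mov ω hωβ'
      · intro ω hω
        have h1 : z' ω = ω := hz'fix ω (fun h => hω h.1)
        have h2 : ω ∉ U := fun h => hω (hUβ ω h)
        rw [Equiv.Perm.mul_apply, h1, hzUfix _ h2]

end Aux

/-- Let `X ∈ 𝓢^q` be closed and exact. Then the center of `Q_X` contains an
element of order `p` which has no fixed points on `supp X`. -/
theorem stmt_17 (p q : ℕ) (hp : p.Prime) (hq : 2 ≤ q)
    (X : Set (Equiv.Perm ℕ)) (hX : memS q X)
    (hclosed : IsClosedSet p X) (hexact : IsExactSet p X)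
    (Q : Subgroup (Equiv.Perm ℕ)) (hQ : IsSylowOf p Q (SX X)) :
    ∃ z : Equiv.Perm ℕ, z ∈ Q ∧ (∀ u ∈ Q, u * z = z * u) ∧
      orderOf z = p ∧ ∀ ω ∈ ssupp X, z ω ≠ ω := by
  haveI : Fact p.Prime := ⟨hp⟩
  have hfin : (ssupp X).Finite :=
    Set.Finite.biUnion hX.1.1 (fun ρ hρ => hX.1.2.2.2 ρ hρ)
  have hsupp : ssupp (Q : Set (Equiv.Perm ℕ)) = ssupp X := hexact Q hQ
  -- there is a nontrivial element of X
  obtain ⟨ρ, hρX, hρne⟩ : ∃ ρ ∈ X, ρ ≠ (1 : Equiv.Perm ℕ) := by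
    by_contra h
    push_neg at h
    exact hX.1.2.2.1 (Set.eq_singleton_iff_nonempty_unique_mem.mpr ⟨hX.1.2.1, h⟩)
  -- ssupp X is invariant under HH X Q
  have hHle : HH X Q ≤ symOn (ssupp X) := by
    rw [HH, Subgroup.closure_le]
    rintro g (hg | hg)
    · exact (Subgroup.mem_inf.mp (hQ.1 hg)).1
    · intro ω hω
      by_contra hc
      exact hω (Set.mem_biUnion hg (show ω ∈ psupp g from hc))
  have hαinv : ∀ h ∈ HH X Q, ∀ ω ∈ ssupp X, h ω ∈ ssupp X :=
    fun h hh ω hω => symOn_maps (hHle hh) hω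
  obtain ⟨z, hzQ, hzc, hzp, hzmov, _⟩ :=
    exists_z_rec hp X Q hQ hfin hsupp (ssupp X).ncard (ssupp X) hfin le_rfl
      (subset_refl _) hαinv
  have hzne : z ≠ 1 := by
    obtain ⟨ω, hω⟩ : ∃ ω, ρ ω ≠ ω := by
      by_contra hc
      push_neg at hc
      exact hρne (Equiv.ext hc)
    have hωα : ω ∈ ssupp X := Set.mem_biUnion hρX (show ω ∈ psupp ρ from hω)
    intro h1
    have := hzmov ω hωα
    rw [h1] at this
    exact this rfl
  exact ⟨z, hzQ, hzc, orderOf_eq_prime hzp hzne, hzmov⟩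

end FPS
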